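/- The set { Σ_{i : Fin n} R i : R : Fin n → ℝ satisfies the pairwise property } has a least element, and this least element equals the minimum, over all j : Fin n and all p : Fin n → Fin n that are arborescences toward j, of the tree cost H[X j] + Σ_{i ≠ j} H[X i | X (p i)]. (The minimum over the finitely many pairs (j, p) exists; e.g. the constant map p ≡ j is an arborescence toward j.) -/

import Mathlib

open MeasureTheory ProbabilityTheory

/-- Shannon entropy (in nats) of a random variable. -/
noncomputable def shEntropy {Ω : Type*} [MeasurableSpace Ω] {S : Type*}
    (μ : Measure Ω) (X : Ω → S) : ℝ :=
  ∑' x : S, Real.negMulLog (μ (X ⁻¹' {x})).toReal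

/-- Conditional Shannon entropy `H[X | Y]`. -/
noncomputable def shCondEntropy {Ω : Type*} [MeasurableSpace Ω] {S T : Type*}
    (μ : Measure Ω) (X : Ω → S) (Y : Ω → T) : ℝ :=
  ∑' y : T, (μ (Y ⁻¹' {y})).toReal * shEntropy (ProbabilityTheory.cond μ (Y ⁻¹' {y})) X

/-- The pairwise property of a rate assignment `R`: for each source `X i` there is an
ordered sequence of sources `X (s 1), …, X (s k)` with `R (s 1) ≥ H[X (s 1)]`,
`R (s j) ≥ H[X (s j) | X (s (j-1))]` for `2 ≤ j ≤ k`, and `R i ≥ H[X i | X (s k)]`. -/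
def PairwiseProperty {Ω S : Type*} [MeasurableSpace Ω] {n : ℕ}
    (μ : Measure Ω) (X : Fin n → Ω → S) (R : Fin n → ℝ) : Prop :=
  ∀ i : Fin n, ∃ (k : ℕ) (s : ℕ → Fin n), 1 ≤ k ∧
    R (s 1) ≥ shEntropy μ (X (s 1)) ∧
    (∀ j : ℕ, 2 ≤ j → j ≤ k → R (s j) ≥ shCondEntropy μ (X (s j)) (X (s (j - 1)))) ∧
    R i ≥ shCondEntropy μ (X i) (X (s k))

/-- The decoding relation of a rate assignment: `a` can help decode `b` if
`H[X b | X a] ≤ R b`. -/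
def decRel {Ω S : Type*} [MeasurableSpace Ω] {n : ℕ}
    (μ : Measure Ω) (X : Fin n → Ω → S) (R : Fin n → ℝ) : Fin n → Fin n → Prop :=
  fun a b => shCondEntropy μ (X b) (X a) ≤ R b

/-- `p` is an arborescence toward the root `j`: iterating `p` from any node reaches `j`. -/
def IsArborescence {n : ℕ} (j : Fin n) (p : Fin n → Fin n) : Prop :=
  ∀ i : Fin n, ∃ m : ℕ, p^[m] i = j

/-- The tree rate assignment associated with a root `j` and parent map `p`. -/
noncomputable def treeRate {Ω S : Type*} [MeasurableSpace Ω] {n : ℕ}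
    (μ : Measure Ω) (X : Fin n → Ω → S) (j : Fin n) (p : Fin n → Fin n) : Fin n → ℝ :=
  fun i => if i = j then shEntropy μ (X j) else shCondEntropy μ (X i) (X (p i))

/-- The cost (sum rate) of the tree rate assignment with root `j` and parent map `p`. -/
noncomputable def treeCost {Ω S : Type*} [MeasurableSpace Ω] {n : ℕ}
    (μ : Measure Ω) (X : Fin n → Ω → S) (j : Fin n) (p : Fin n → Fin n) : ℝ :=
  shEntropy μ (X j) + ∑ i ∈ Finset.univ.erase j, shCondEntropy μ (X i) (X (p i))

/-!
A pairwise-valid rate assignment `R` makes every source decodable from any other along the edges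
`a → b` with `H[X b | X a] ≤ R b` (`decRel`): the first step of a chain is allowed because
conditioning reduces entropy. A shortest-path tree of this decoding graph, rooted at a source `j`
with `H[X j] ≤ R j`, is an arborescence of tree cost at most `∑ i, R i`. Conversely, the tree rates
of an arborescence are pairwise valid, the chain for `i` being the path from the root down to the
parent of `i`. Hence the two minima coincide.
-/

section Entropy

variable {Ω S T : Type*} [MeasurableSpace Ω] {μ : Measure Ω}

lemma shEntropy_eq_sum {X : Ω → S} (hX : (Set.range X).Finite) :
    shEntropy μ X = ∑ x ∈ hX.toFinset, Real.negMulLog (μ.real (X ⁻¹' {x})) :=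
  tsum_eq_sum fun x hx => by
    rw [Set.preimage_singleton_eq_empty.mpr (by simpa using hx)]
    simp

lemma sum_measureReal_preimage_singleton_inter [MeasurableSpace T] [MeasurableSingletonClass T]
    [IsFiniteMeasure μ] {Y : Ω → T} (hY : Measurable Y) (hfY : (Set.range Y).Finite) (B : Set Ω) :
    ∑ y ∈ hfY.toFinset, μ.real (Y ⁻¹' {y} ∩ B) = μ.real B := by
  have hfib : ∀ y, MeasurableSet (Y ⁻¹' {y}) := fun y => hY (measurableSet_singleton y)
  calc ∑ y ∈ hfY.toFinset, μ.real (Y ⁻¹' {y} ∩ B)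
      = ∑ y ∈ hfY.toFinset, (μ.restrict B).real (Y ⁻¹' {y}) := by
        simp only [measureReal_def, Measure.restrict_apply (hfib _)]
    _ = (μ.restrict B).real (Y ⁻¹' hfY.toFinset) :=
        sum_measureReal_preimage_singleton _ fun y _ => hfib y
    _ = μ.real B := by simp [measureReal_def]

lemma shCondEntropy_eq_sum {X : Ω → S} {Y : Ω → T} (hfY : (Set.range Y).Finite) :
    shCondEntropy μ X Y = ∑ y ∈ hfY.toFinset, μ.real (Y ⁻¹' {y}) * shEntropy μ[|Y ⁻¹' {y}] X :=
  tsum_eq_sum fun y hy => by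
    rw [Set.preimage_singleton_eq_empty.mpr (by simpa using hy)]
    simp

/-- Jensen's inequality for the concave function `negMulLog`, applied for each value `x` of `X`
to the weights `P[Y = y]` and the points `P[X = x | Y = y]`. -/
lemma shCondEntropy_le_shEntropy [MeasurableSpace T] [MeasurableSingletonClass T]
    [IsProbabilityMeasure μ] {X : Ω → S} {Y : Ω → T}
    (hY : Measurable Y) (hfX : (Set.range X).Finite) (hfY : (Set.range Y).Finite) :
    shCondEntropy μ X Y ≤ shEntropy μ X := by
  simp only [shCondEntropy_eq_sum hfY, shEntropy_eq_sum hfX, Finset.mul_sum]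
  rw [Finset.sum_comm]
  refine Finset.sum_le_sum fun x _ => ?_
  have hweight : ∑ y ∈ hfY.toFinset, μ.real (Y ⁻¹' {y}) = 1 := by
    simpa using sum_measureReal_preimage_singleton_inter (μ := μ) hY hfY Set.univ
  have hjoint : ∀ y, μ.real (Y ⁻¹' {y}) * (μ[|Y ⁻¹' {y}]).real (X ⁻¹' {x}) =
      μ.real (Y ⁻¹' {y} ∩ X ⁻¹' {x}) := fun y => by
    simp only [measureReal_def, ← ENNReal.toReal_mul, mul_comm (μ _),
      cond_mul_eq_inter (hY (measurableSet_singleton y))]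
  calc _ ≤ Real.negMulLog
          (∑ y ∈ hfY.toFinset, μ.real (Y ⁻¹' {y}) * (μ[|Y ⁻¹' {y}]).real (X ⁻¹' {x})) :=
        Real.concaveOn_negMulLog.le_map_sum (fun _ _ => measureReal_nonneg) hweight
          fun _ _ => Set.mem_Ici.mpr measureReal_nonneg
    _ = Real.negMulLog (μ.real (X ⁻¹' {x})) := by
        simp only [hjoint, sum_measureReal_preimage_singleton_inter hY hfY]

end Entropy

def ReachesIn {α : Type*} (r : α → α → Prop) (a : α) : ℕ → α → Prop
  | 0, b => b = a
  | m + 1, b => ∃ c, ReachesIn r a m c ∧ r c b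

section Reachability

variable {α : Type*} {r : α → α → Prop} {a b : α}

lemma Relation.ReflTransGen.exists_reachesIn (h : Relation.ReflTransGen r a b) :
    ∃ m, ReachesIn r a m b := by
  induction h with
  | refl => exact ⟨0, rfl⟩
  | tail _ hcb ih =>
    obtain ⟨m, hm⟩ := ih
    exact ⟨m + 1, _, hm, hcb⟩

/-- A shortest-path tree: the parent of `b ≠ a` is the penultimate vertex of a shortest
`r`-path from `a` to `b`, which is strictly closer to `a`. -/
lemma exists_parent_map_of_forall_reflTransGen (h : ∀ b, Relation.ReflTransGen r a b) :
    ∃ p : α → α, (∀ b, ∃ m, p^[m] b = a) ∧ ∀ b, b ≠ a → r (p b) b := by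
  classical
  have hreach : ∀ b, ∃ m, ReachesIn r a m b := fun b => (h b).exists_reachesIn
  obtain ⟨d, hd, hd_le⟩ : ∃ d : α → ℕ, (∀ b, ReachesIn r a (d b) b) ∧
      ∀ b m, ReachesIn r a m b → d b ≤ m :=
    ⟨fun b => Nat.find (hreach b), fun b => Nat.find_spec (hreach b),
      fun _ _ h => Nat.find_min' _ h⟩
  have hparent : ∀ b, b ≠ a → ∃ c, r c b ∧ d c < d b := by
    intro b hb
    obtain ⟨m, hm⟩ : ∃ m, d b = m + 1 := Nat.exists_eq_succ_of_ne_zero fun h0 => by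
      have hb0 := hd b
      rw [h0] at hb0
      exact hb hb0
    obtain ⟨c, hc, hcb⟩ : ReachesIn r a (m + 1) b := hm ▸ hd b
    exact ⟨c, hcb, by have := hd_le c m hc; omega⟩
  choose! p hpr hpd using hparent
  refine ⟨p, fun b => ?_, hpr⟩
  induction hN : d b using Nat.strong_induction_on generalizing b with
  | _ N ih =>
    by_cases hb : b = a
    · exact ⟨0, hb⟩
    · obtain ⟨m, hm⟩ := ih _ (hN ▸ hpd b hb) (p b) rfl
      exact ⟨m + 1, by rwa [Function.iterate_succ_apply]⟩

end Reachability

section Rates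

variable {Ω S : Type*} [MeasurableSpace Ω] {n : ℕ} {μ : Measure Ω} {X : Fin n → Ω → S}
  {R : Fin n → ℝ} {j : Fin n} {p : Fin n → Fin n}

lemma pairwiseProperty_of_isArborescence (hp : IsArborescence j p)
    (hj : shEntropy μ (X j) ≤ R j) (hR : ∀ i, decRel μ X R (p i) i) :
    PairwiseProperty μ X R := by
  intro i
  obtain ⟨m, hm⟩ := hp (p i)
  -- the chain for `i` is the path `p i, p (p i), …, j` read backwards
  refine ⟨m + 1, fun t => p^[m + 1 - t] (p i), by omega, ?_, fun t ht2 htm => ?_, ?_⟩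
  · simpa only [Nat.add_sub_cancel, hm] using hj
  · dsimp only
    rw [show m + 1 - (t - 1) = m + 1 - t + 1 by omega, Function.iterate_succ_apply']
    exact hR _
  · dsimp only
    rw [Nat.sub_self, Function.iterate_zero_apply]
    exact hR i

lemma reflTransGen_decRel_of_pairwiseProperty
    (hcond : ∀ a b, shCondEntropy μ (X b) (X a) ≤ shEntropy μ (X b))
    (hR : PairwiseProperty μ X R) (j i : Fin n) :
    Relation.ReflTransGen (decRel μ X R) j i := by
  obtain ⟨k, s, hk, hs1, hs, hsi⟩ := hR i
  have hchain : ∀ t, 1 ≤ t → t ≤ k → Relation.ReflTransGen (decRel μ X R) j (s t) := by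
    intro t ht
    induction t, ht using Nat.le_induction with
    | base => exact fun _ => .single ((hcond j (s 1)).trans hs1)
    | succ t ht ih => exact fun htk => (ih (by omega)).tail (hs (t + 1) (by omega) htk)
  exact (hchain k hk le_rfl).tail hsi

lemma sum_treeRate : ∑ i, treeRate μ X j p i = treeCost μ X j p := by
  rw [treeCost, ← Finset.add_sum_erase _ _ (Finset.mem_univ j)]
  congr 1
  · simp [treeRate]
  · exact Finset.sum_congr rfl fun i hi => if_neg (Finset.ne_of_mem_erase hi)

lemma treeCost_le_sum (hj : shEntropy μ (X j) ≤ R j)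
    (hR : ∀ i, i ≠ j → decRel μ X R (p i) i) : treeCost μ X j p ≤ ∑ i, R i := by
  rw [treeCost, ← Finset.add_sum_erase _ _ (Finset.mem_univ j)]
  exact add_le_add hj (Finset.sum_le_sum fun i hi => hR i (Finset.ne_of_mem_erase hi))

lemma pairwiseProperty_treeRate
    (hcond : ∀ a b, shCondEntropy μ (X b) (X a) ≤ shEntropy μ (X b))
    (hp : IsArborescence j p) : PairwiseProperty μ X (treeRate μ X j p) := by
  refine pairwiseProperty_of_isArborescence hp (by simp [treeRate]) fun i => ?_
  by_cases hi : i = j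
  · subst hi
    simpa [decRel, treeRate] using hcond (p i) i
  · simp [decRel, treeRate, hi]

lemma exists_isArborescence_treeCost_le [NeZero n]
    (hcond : ∀ a b, shCondEntropy μ (X b) (X a) ≤ shEntropy μ (X b))
    (hR : PairwiseProperty μ X R) :
    ∃ j p, IsArborescence j p ∧ treeCost μ X j p ≤ ∑ i, R i := by
  obtain ⟨-, s, -, hj, -, -⟩ := hR 0
  obtain ⟨p, hp, hpR⟩ := exists_parent_map_of_forall_reflTransGen
    (reflTransGen_decRel_of_pairwiseProperty hcond hR (s 1))
  exact ⟨s 1, p, hp, treeCost_le_sum hj hpR⟩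

end Rates

/-- The set of sum rates of pairwise-valid rate assignments has a least element,
and it equals the minimum tree cost over all roots and arborescences. -/
theorem minSumRate_eq_minArborescenceCost
    {Ω S : Type*} [MeasurableSpace Ω] [MeasurableSpace S] [MeasurableSingletonClass S]
    (μ : Measure Ω) [IsProbabilityMeasure μ] {n : ℕ} (hn : 1 ≤ n)
    (X : Fin n → Ω → S) (hX : ∀ i, Measurable (X i))
    (hfin : ∀ i, (Set.range (X i)).Finite) :
    ∃ m : ℝ,
      IsLeast {s : ℝ | ∃ R : Fin n → ℝ, PairwiseProperty μ X R ∧ s = ∑ i, R i} m ∧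
      IsLeast {c : ℝ | ∃ (j : Fin n) (p : Fin n → Fin n),
        IsArborescence j p ∧ c = treeCost μ X j p} m := by
  have : NeZero n := ⟨by omega⟩
  have hcond : ∀ a b, shCondEntropy μ (X b) (X a) ≤ shEntropy μ (X b) :=
    fun a b => shCondEntropy_le_shEntropy (hX a) (hfin b) (hfin a)
  obtain ⟨⟨j, p⟩, hp, hmin⟩ := Set.exists_min_image
    {q : Fin n × (Fin n → Fin n) | IsArborescence q.1 q.2} (fun q => treeCost μ X q.1 q.2)
    (Set.toFinite _) ⟨(0, fun _ => 0), fun _ => ⟨1, rfl⟩⟩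
  refine ⟨treeCost μ X j p, ⟨⟨treeRate μ X j p, pairwiseProperty_treeRate hcond hp,
    sum_treeRate.symm⟩, ?_⟩, ⟨j, p, hp, rfl⟩, ?_⟩
  · rintro _ ⟨R, hR, rfl⟩
    obtain ⟨j', p', hp', hle⟩ := exists_isArborescence_treeCost_le hcond hR
    exact (hmin (j', p') hp').trans hle
  · rintro _ ⟨j', p', hp', rfl⟩
    exact hmin (j', p') hp'
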